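/- The primary difference-in-differences identifies the ATT plus a bias term: suppose no anticipation and the constant violation of conditional parallel trends hold. Then for every pair of strata r ≠ r' in R, every g, g' ∈ 𝔾 and t, t* ∈ 𝕋 with t* < g ≤ t < g', μ(G_r = g) > 0 and μ(G_r = g') > 0: E[Y_{rt} − Y_{rt*} | G_r = g] − E[Y_{rt} − Y_{rt*} | G_r = g'] = ATT_r(g,t) + (E[Y_{r't}(∞) − Y_{r't*}(∞) | G_r = g] − E[Y_{r't}(∞) − Y_{r't*}(∞) | G_r = g']). -/
import Mathlib


open MeasureTheory ProbabilityTheory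

/-- The set of time periods `{1, …, T}`. -/
def TimeSet (T : ℕ) : Set ℕ := Set.Icc 1 T

/-- The set of treatment-initiation values `{2, …, T} ∪ {∞}`. -/
def GSet (T : ℕ) : Set ℕ∞ :=
  {g | g = ⊤ ∨ ∃ n : ℕ, 2 ≤ n ∧ n ≤ T ∧ g = (n : ℕ∞)}

/-- Expectation of `f` under the conditional probability measure `μ(· | A)`. -/
noncomputable def condMean {Ω : Type*} [MeasurableSpace Ω] (μ : Measure Ω)
    (A : Set Ω) (f : Ω → ℝ) : ℝ :=
  ∫ ω, f ω ∂(μ[|A])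

/-- The conditional group-time ATT:
`ATT_r(g,t) = E[Y_{rt}(g) − Y_{rt}(∞) | G_r = g]`. -/
noncomputable def ATT {Ω R : Type*} [MeasurableSpace Ω] (μ : Measure Ω)
    (G : R → Ω → ℕ∞) (Y : R → ℕ → ℕ∞ → Ω → ℝ) (r : R) (g : ℕ∞) (t : ℕ) : ℝ :=
  condMean μ {ω | G r ω = g} (fun ω => Y r t g ω - Y r t ⊤ ω)

lemma integrable_cond' {Ω : Type*} [MeasurableSpace Ω] {μ : Measure Ω}
    {A : Set Ω} (hA : μ A ≠ 0) {f : Ω → ℝ} (hf : Integrable f μ) :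
    Integrable f (μ[|A]) := by
  rw [ProbabilityTheory.cond]
  exact (hf.restrict).smul_measure (ENNReal.inv_ne_top.mpr hA)

lemma condMean_sub {Ω : Type*} [MeasurableSpace Ω] {μ : Measure Ω}
    {A : Set Ω} (hA : μ A ≠ 0) {f h : Ω → ℝ}
    (hf : Integrable f μ) (hh : Integrable h μ) :
    condMean μ A (fun ω => f ω - h ω) = condMean μ A f - condMean μ A h :=
  integral_sub (integrable_cond' hA hf) (integrable_cond' hA hh)

lemma condMean_congr_ae {Ω : Type*} [MeasurableSpace Ω] {μ : Measure Ω}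
    {A : Set Ω} {f h : Ω → ℝ} (hfh : f =ᵐ[μ] h) :
    condMean μ A f = condMean μ A h :=
  integral_congr_ae (cond_absolutelyContinuous.ae_eq hfh)

lemma condMean_congr_on {Ω : Type*} [MeasurableSpace Ω] {μ : Measure Ω}
    {A : Set Ω} (hA : MeasurableSet A) {f h : Ω → ℝ}
    (hfh : ∀ ω ∈ A, f ω = h ω) :
    condMean μ A f = condMean μ A h := by
  refine integral_congr_ae ?_
  rw [ProbabilityTheory.cond]
  refine Measure.ae_smul_measure ?_ _
  exact (ae_restrict_mem hA).mono hfh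

/-- under no anticipation and the constant violation of conditional parallel
trends, the primary difference-in-differences of observed outcomes identifies the
conditional group-time ATT plus a bias term. -/
theorem primary_did_identifies_att_plus_bias
    {Ω : Type*} [MeasurableSpace Ω] (μ : Measure Ω) [IsProbabilityMeasure μ]
    {R : Type*} (T : ℕ)
    (G : R → Ω → ℕ∞) (Y : R → ℕ → ℕ∞ → Ω → ℝ)
    (hGmeas : ∀ r, Measurable (G r))
    (hYmeas : ∀ r t g, Measurable (Y r t g))
    (hYint : ∀ r t g, Integrable (Y r t g) μ)
    -- No anticipation
    (hNA : ∀ (r : R) (g : ℕ∞) (t : ℕ), g ∈ GSet T → t ∈ TimeSet T →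
      (t : ℕ∞) < g → Y r t g =ᵐ[μ] Y r t ⊤)
    -- Constant violation of conditional parallel trends
    (hCV : ∀ (r r' : R), r ≠ r' → ∀ (t t' : ℕ), t ∈ TimeSet T → t' ∈ TimeSet T → t ≠ t' →
      ∀ (g g' : ℕ∞), g ∈ GSet T → g' ∈ GSet T → g ≠ g' →
      0 < μ {ω | G r ω = g} → 0 < μ {ω | G r ω = g'} →
      condMean μ {ω | G r ω = g} (fun ω => Y r t ⊤ ω - Y r t' ⊤ ω) -
        condMean μ {ω | G r ω = g'} (fun ω => Y r t ⊤ ω - Y r t' ⊤ ω) =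
      condMean μ {ω | G r ω = g} (fun ω => Y r' t ⊤ ω - Y r' t' ⊤ ω) -
        condMean μ {ω | G r ω = g'} (fun ω => Y r' t ⊤ ω - Y r' t' ⊤ ω)) :
    ∀ (r r' : R), r ≠ r' → ∀ (g g' : ℕ∞) (t tstar : ℕ), g ∈ GSet T → g' ∈ GSet T →
      t ∈ TimeSet T → tstar ∈ TimeSet T →
      (tstar : ℕ∞) < g → g ≤ (t : ℕ∞) → (t : ℕ∞) < g' →
      0 < μ {ω | G r ω = g} → 0 < μ {ω | G r ω = g'} →
      condMean μ {ω | G r ω = g}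
          (fun ω => Y r t (G r ω) ω - Y r tstar (G r ω) ω) -
        condMean μ {ω | G r ω = g'}
          (fun ω => Y r t (G r ω) ω - Y r tstar (G r ω) ω) =
      ATT μ G Y r g t +
        (condMean μ {ω | G r ω = g} (fun ω => Y r' t ⊤ ω - Y r' tstar ⊤ ω) -
          condMean μ {ω | G r ω = g'} (fun ω => Y r' t ⊤ ω - Y r' tstar ⊤ ω)) := by
  intro r r' hrr' g g' t tstar hg hg' ht htstar h1 h2 h3 hApos hBpos
  set A := {ω | G r ω = g} with hAdef
  set B := {ω | G r ω = g'} with hBdef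
  have hAm : MeasurableSet A := hGmeas r (measurableSet_singleton g)
  have hBm : MeasurableSet B := hGmeas r (measurableSet_singleton g')
  have hA0 : μ A ≠ 0 := hApos.ne'
  have hB0 : μ B ≠ 0 := hBpos.ne'
  have htlt : (tstar : ℕ∞) < (t : ℕ∞) := lt_of_lt_of_le h1 h2
  have htne : t ≠ tstar := by
    intro h; subst h; exact lt_irrefl _ htlt
  have hgne : g ≠ g' := by
    intro h; subst h; exact absurd (lt_of_le_of_lt h2 h3) (lt_irrefl _)
  -- rewrite the observed-outcome condMeans
  have stepA : condMean μ A (fun ω => Y r t (G r ω) ω - Y r tstar (G r ω) ω)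
      = condMean μ A (fun ω => Y r t g ω - Y r tstar ⊤ ω) := by
    have e1 : condMean μ A (fun ω => Y r t (G r ω) ω - Y r tstar (G r ω) ω)
        = condMean μ A (fun ω => Y r t g ω - Y r tstar g ω) := by
      refine condMean_congr_on hAm (fun ω hω => ?_)
      simp only [hAdef, Set.mem_setOf_eq] at hω
      rw [hω]
    rw [e1]
    refine condMean_congr_ae ?_
    filter_upwards [hNA r g tstar hg htstar h1] with ω hω
    rw [hω]
  have stepB : condMean μ B (fun ω => Y r t (G r ω) ω - Y r tstar (G r ω) ω)
      = condMean μ B (fun ω => Y r t ⊤ ω - Y r tstar ⊤ ω) := by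
    have e1 : condMean μ B (fun ω => Y r t (G r ω) ω - Y r tstar (G r ω) ω)
        = condMean μ B (fun ω => Y r t g' ω - Y r tstar g' ω) := by
      refine condMean_congr_on hBm (fun ω hω => ?_)
      simp only [hBdef, Set.mem_setOf_eq] at hω
      rw [hω]
    rw [e1]
    refine condMean_congr_ae ?_
    filter_upwards [hNA r g' t hg' ht h3, hNA r g' tstar hg' htstar (htlt.trans h3)]
      with ω h1' h2'
    rw [h1', h2']
  rw [stepA, stepB]
  have key := hCV r r' hrr' t tstar ht htstar htne g g' hg hg' hgne hApos hBpos
  have expandA : condMean μ A (fun ω => Y r t g ω - Y r tstar ⊤ ω)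
      = condMean μ A (Y r t g) - condMean μ A (Y r tstar ⊤) :=
    condMean_sub hA0 (hYint r t g) (hYint r tstar ⊤)
  have expandATT : ATT μ G Y r g t
      = condMean μ A (Y r t g) - condMean μ A (Y r t ⊤) :=
    condMean_sub hA0 (hYint r t g) (hYint r t ⊤)
  have expandAinf : condMean μ A (fun ω => Y r t ⊤ ω - Y r tstar ⊤ ω)
      = condMean μ A (Y r t ⊤) - condMean μ A (Y r tstar ⊤) :=
    condMean_sub hA0 (hYint r t ⊤) (hYint r tstar ⊤)
  have expandBinf : condMean μ B (fun ω => Y r t ⊤ ω - Y r tstar ⊤ ω)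
      = condMean μ B (Y r t ⊤) - condMean μ B (Y r tstar ⊤) :=
    condMean_sub hB0 (hYint r t ⊤) (hYint r tstar ⊤)
  rw [expandA, expandATT, ← key, expandAinf, expandBinf]
  ring
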